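/- arXiv:2511.08171 — 3 statements merged into one kernel-verified Lean document; each statement's English description precedes it below -/
import Mathlib

section
/- Let H be a real Hilbert space and G a real Hilbert space, T : H → G a bounded linear map, A : H → H' a bounded linear operator satisfying the coercivity m‖w‖² ≤ ⟨Aw, w⟩ and boundedness ⟨Aw, z⟩ ≤ M‖w‖‖z‖ for constants m, M > 0. Let α : G → G be a bounded, self-adjoint linear operator with (αp, p) ≥ α₀‖p‖² for some α₀ > 0. Then for every v ∈ G there exists a unique pair (w, p) ∈ H × G satisfying ⟨Aw, z⟩ − (p, Tz) = 0 for all z ∈ H and (Tw, q) + (αp, q) = (v, q) for all q ∈ G. -/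
/-!
Write the unknowns as `u = (w, p)` in the `L²` product `H × G`. The system then says
`B u z = ⟪(0, v), z⟫` for all `z`, where
`B (w, p) (z, q) = A w z - ⟪p, T z⟫ + ⟪T w, q⟫ + ⟪α p, q⟫`.
The two coupling terms enter with opposite signs and cancel on the diagonal, so
`B u u = A w w + ⟪α p, p⟫ ≥ min m α₀ * ‖u‖ ^ 2`, and Lax–Milgram applies to `B`.
-/

open RealInnerProductSpace

section LaxMilgram

variable {V : Type*} [NormedAddCommGroup V] [InnerProductSpace ℝ V] [CompleteSpace V]

theorem IsCoercive.existsUnique_apply_eq_inner {B : V →L[ℝ] V →L[ℝ] ℝ} (hB : IsCoercive B)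
    (f : V) : ∃! u : V, ∀ z, B u z = ⟪f, z⟫ := by
  refine ⟨hB.continuousLinearEquivOfBilin.symm f, fun z => ?_, fun u hu => ?_⟩
  · rw [← hB.continuousLinearEquivOfBilin_apply, ContinuousLinearEquiv.apply_symm_apply]
  · rw [hB.unique_continuousLinearEquivOfBilin (fun z => (hu z).symm),
      ContinuousLinearEquiv.symm_apply_apply]

end LaxMilgram

section SaddlePoint

variable {H G : Type*} [NormedAddCommGroup H] [InnerProductSpace ℝ H]
  [NormedAddCommGroup G] [InnerProductSpace ℝ G]

noncomputable def saddlePointForm (A : H →L[ℝ] H →L[ℝ] ℝ) (T : H →L[ℝ] G)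
    (C : G →L[ℝ] G →L[ℝ] ℝ) : WithLp 2 (H × G) →L[ℝ] WithLp 2 (H × G) →L[ℝ] ℝ :=
  let π₁ := WithLp.fstL 2 ℝ H G
  let π₂ := WithLp.sndL 2 ℝ H G
  let coupling :=
    (isBoundedBilinearMap_inner (𝕜 := ℝ) (E := G)).toContinuousLinearMap.bilinearComp (T ∘L π₁) π₂
  A.bilinearComp π₁ π₁ - coupling.flip + coupling + C.bilinearComp π₂ π₂

@[simp]
theorem saddlePointForm_apply (A : H →L[ℝ] H →L[ℝ] ℝ) (T : H →L[ℝ] G)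
    (C : G →L[ℝ] G →L[ℝ] ℝ) (u z : WithLp 2 (H × G)) :
    saddlePointForm A T C u z =
      A u.fst z.fst - ⟪u.snd, T z.fst⟫ + ⟪T u.fst, z.snd⟫ + C u.snd z.snd := by
  simp [saddlePointForm, real_inner_comm]

theorem isCoercive_saddlePointForm {A : H →L[ℝ] H →L[ℝ] ℝ} {C : G →L[ℝ] G →L[ℝ] ℝ}
    (hA : IsCoercive A) (hC : IsCoercive C) (T : H →L[ℝ] G) :
    IsCoercive (saddlePointForm A T C) := by
  obtain ⟨a, ha, hA⟩ := hA
  obtain ⟨c, hc, hC⟩ := hC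
  refine ⟨min a c, lt_min ha hc, fun u => ?_⟩
  have hnorm : ‖u‖ * ‖u‖ = ‖u.fst‖ * ‖u.fst‖ + ‖u.snd‖ * ‖u.snd‖ := by
    simpa only [sq] using WithLp.prod_norm_sq_eq_of_L2 u
  have h₁ : min a c * ‖u.fst‖ * ‖u.fst‖ ≤ a * ‖u.fst‖ * ‖u.fst‖ := by
    gcongr; exact min_le_left a c
  have h₂ : min a c * ‖u.snd‖ * ‖u.snd‖ ≤ c * ‖u.snd‖ * ‖u.snd‖ := by
    gcongr; exact min_le_right a c
  calc min a c * ‖u‖ * ‖u‖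
    _ ≤ a * ‖u.fst‖ * ‖u.fst‖ + c * ‖u.snd‖ * ‖u.snd‖ := by
      rw [mul_assoc, hnorm]; linarith
    _ ≤ A u.fst u.fst + C u.snd u.snd := add_le_add (hA _) (hC _)
    _ = saddlePointForm A T C u u := by
      rw [saddlePointForm_apply, real_inner_comm (T u.fst)]; ring

theorem saddlePointForm_apply_eq_inner_iff (A : H →L[ℝ] H →L[ℝ] ℝ) (T : H →L[ℝ] G)
    (C : G →L[ℝ] G →L[ℝ] ℝ) (w : H) (p v : G) :
    (∀ z, saddlePointForm A T C (WithLp.toLp 2 (w, p)) z =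
        ⟪WithLp.toLp 2 ((0 : H), v), z⟫) ↔
      (∀ z : H, A w z - ⟪p, T z⟫ = 0) ∧ (∀ q : G, ⟪T w, q⟫ + C p q = ⟪v, q⟫) := by
  simp only [saddlePointForm_apply, WithLp.prod_inner_apply]
  constructor
  · intro h
    refine ⟨fun z => ?_, fun q => ?_⟩
    · simpa using h (WithLp.toLp 2 (z, 0))
    · simpa using h (WithLp.toLp 2 (0, q))
  · rintro ⟨h₁, h₂⟩ z
    simp only [WithLp.toLp_fst, WithLp.toLp_snd, WithLp.ofLp_fst, inner_zero_left,
      WithLp.ofLp_snd, zero_add]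
    linarith [h₁ z.fst, h₂ z.snd]

end SaddlePoint

theorem stmt0_general
    {H G : Type*} [NormedAddCommGroup H] [InnerProductSpace ℝ H] [CompleteSpace H]
    [NormedAddCommGroup G] [InnerProductSpace ℝ G] [CompleteSpace G]
    (T : H →L[ℝ] G) (A : H →L[ℝ] StrongDual ℝ H)
    (m : ℝ) (hm : 0 < m)
    (hcoer : ∀ w : H, m * ‖w‖ ^ 2 ≤ A w w)
    (α : G →L[ℝ] G)
    (α₀ : ℝ) (hα₀ : 0 < α₀) (hαpos : ∀ p : G, α₀ * ‖p‖ ^ 2 ≤ ⟪α p, p⟫) :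
    ∀ v : G, ∃! wp : H × G,
      (∀ z : H, A wp.1 z - ⟪wp.2, T z⟫ = 0) ∧
      (∀ q : G, ⟪T wp.1, q⟫ + ⟪α wp.2, q⟫ = ⟪v, q⟫) := by
  intro v
  let C : G →L[ℝ] G →L[ℝ] ℝ :=
    (isBoundedBilinearMap_inner (𝕜 := ℝ)).toContinuousLinearMap ∘L α
  have hA : IsCoercive (A : H →L[ℝ] H →L[ℝ] ℝ) :=
    ⟨m, hm, fun w => by rw [mul_assoc, ← sq]; exact hcoer w⟩
  have hC : IsCoercive C := ⟨α₀, hα₀, fun p => by rw [mul_assoc, ← sq]; exact hαpos p⟩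
  refine ((WithLp.equiv 2 (H × G)).existsUnique_congr' fun wp => ?_).mp
    ((isCoercive_saddlePointForm hA hC T).existsUnique_apply_eq_inner (WithLp.toLp 2 (0, v)))
  exact saddlePointForm_apply_eq_inner_iff (A : H →L[ℝ] H →L[ℝ] ℝ) T C wp.1 wp.2 v

/-- Well-posedness of the regularized DtN saddle-point system (eqn (12)),
abstracted to Hilbert spaces. -/
theorem stmt0
    {H G : Type*} [NormedAddCommGroup H] [InnerProductSpace ℝ H] [CompleteSpace H]
    [NormedAddCommGroup G] [InnerProductSpace ℝ G] [CompleteSpace G]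
    (T : H →L[ℝ] G) (A : H →L[ℝ] StrongDual ℝ H)
    (m M : ℝ) (hm : 0 < m) (hM : 0 < M)
    (hcoer : ∀ w : H, m * ‖w‖ ^ 2 ≤ A w w)
    (hbdd : ∀ w z : H, A w z ≤ M * ‖w‖ * ‖z‖)
    (α : G →L[ℝ] G) (hαsa : ∀ p q : G, ⟪α p, q⟫ = ⟪p, α q⟫)
    (α₀ : ℝ) (hα₀ : 0 < α₀) (hαpos : ∀ p : G, α₀ * ‖p‖ ^ 2 ≤ ⟪α p, p⟫) :
    ∀ v : G, ∃! wp : H × G,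
      (∀ z : H, A wp.1 z - ⟪wp.2, T z⟫ = 0) ∧
      (∀ q : G, ⟪T wp.1, q⟫ + ⟪α wp.2, q⟫ = ⟪v, q⟫) :=
  stmt0_general T A m hm hcoer α α₀ hα₀ hαpos
end

section
/- Under the assumptions of the regularized DtN system (A coercive with constant m > 0 and bounded on a Hilbert space H, T : H → G bounded, and α the multiplication operator by a function taking value α_d > 0 on a measurable set D and α_n > 0 on its complement N, in G = L²(Γ)), the unique solution p of the system ⟨Aw, z⟩ − (p, Tz)_{L²(Γ)} = 0 for all z and (Tw, q)_{L²(Γ)} + (α p, q)_{L²(Γ)} = (v, q)_{L²(Γ)} for all q satisfies the stability estimate α_d‖p‖²_{L²(D)} + α_n‖p‖²_{L²(N)} ≤ α_d⁻¹‖v‖²_{L²(D)} + α_n⁻¹‖v‖²_{L²(N)}. -/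
/-!
Testing the first equation with `z = w` and the second with `q = p` gives
`⟪α p, p⟫ = ⟪v, p⟫ - A w w ≤ ⟪v, p⟫` by coercivity. Splitting both inner products over `D` and
`Dᶜ`, the weighted AM-GM inequality `2 v p ≤ a⁻¹ v² + a p²` with `a = αd` on `D` and `a = αn`
on `Dᶜ` bounds `⟪v, p⟫` by half the right-hand side plus half the left-hand side.
-/

open RealInnerProductSpace MeasureTheory

section

variable {Γ : Type*} [MeasurableSpace Γ] {μ : Measure Γ}

theorem two_mul_integral_mul_le {f g : Γ → ℝ} (hf : MemLp f 2 μ) (hg : MemLp g 2 μ)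
    {a : ℝ} (ha : 0 < a) :
    2 * ∫ x, f x * g x ∂μ ≤ a⁻¹ * ∫ x, f x ^ 2 ∂μ + a * ∫ x, g x ^ 2 ∂μ := by
  rw [← integral_const_mul, ← integral_const_mul, ← integral_const_mul,
    ← integral_add (hf.integrable_sq.const_mul _) (hg.integrable_sq.const_mul _)]
  refine integral_mono ((hf.integrable_mul hg).const_mul _)
    ((hf.integrable_sq.const_mul _).add (hg.integrable_sq.const_mul _)) fun x => ?_
  have hsq : a⁻¹ * (f x - a * g x) ^ 2 = a⁻¹ * f x ^ 2 + a * g x ^ 2 - 2 * (f x * g x) := by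
    field_simp
    ring
  have : 0 ≤ a⁻¹ * (f x - a * g x) ^ 2 := by positivity
  dsimp only
  linarith

theorem inner_eq_setIntegral_add_setIntegral_compl {s : Set Γ} (hs : MeasurableSet s)
    (f g : Lp ℝ 2 μ) :
    ⟪f, g⟫ = ∫ x in s, f x * g x ∂μ + ∫ x in sᶜ, f x * g x ∂μ := by
  rw [L2.inner_def, ← integral_add_compl hs (L2.integrable_inner f g)]
  simp only [RCLike.inner_apply, conj_trivial, mul_comm]

theorem setIntegral_mul_eq_const_mul_setIntegral_sq {s : Set Γ} (hs : MeasurableSet s)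
    {f g : Γ → ℝ} (c : ℝ) (h : ∀ᵐ x ∂μ, x ∈ s → g x = c * f x) :
    ∫ x in s, g x * f x ∂μ = c * ∫ x in s, f x ^ 2 ∂μ := by
  rw [← integral_const_mul]
  refine setIntegral_congr_ae hs (h.mono fun x hx hxs => ?_)
  rw [hx hxs]
  ring

end

theorem stmt1_general
    {H : Type*} [NormedAddCommGroup H] [InnerProductSpace ℝ H]
    {Γ : Type*} [MeasurableSpace Γ] (μ : Measure Γ)
    (A : H →L[ℝ] StrongDual ℝ H) (m : ℝ) (hm : 0 < m)
    (hcoer : ∀ w : H, m * ‖w‖ ^ 2 ≤ A w w)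
    (T : H →L[ℝ] Lp ℝ 2 μ)
    (D : Set Γ) (hD : MeasurableSet D)
    (αd αn : ℝ) (hαd : 0 < αd) (hαn : 0 < αn)
    (α : Lp ℝ 2 μ →L[ℝ] Lp ℝ 2 μ)
    (hα : ∀ f : Lp ℝ 2 μ, (α f : Γ → ℝ) =ᵐ[μ] fun x => (Set.indicator D (fun _ => αd) x + Set.indicator Dᶜ (fun _ => αn) x) * f x)
    (v : Lp ℝ 2 μ) (w : H) (p : Lp ℝ 2 μ)
    (h1 : ∀ z : H, A w z - ⟪p, T z⟫ = 0)
    (h2 : ∀ q : Lp ℝ 2 μ, ⟪T w, q⟫ + ⟪α p, q⟫ = ⟪v, q⟫) :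
    αd * ∫ x in D, (p x) ^ 2 ∂μ + αn * ∫ x in Dᶜ, (p x) ^ 2 ∂μ ≤
      αd⁻¹ * ∫ x in D, (v x) ^ 2 ∂μ + αn⁻¹ * ∫ x in Dᶜ, (v x) ^ 2 ∂μ := by
  have hαp_le_vp : ⟪α p, p⟫ ≤ ⟪v, p⟫ := by
    have hAww : 0 ≤ A w w := (by positivity : 0 ≤ m * ‖w‖ ^ 2).trans (hcoer w)
    linarith [h1 w, h2 p, real_inner_comm p (T w)]
  have hαp_eq : ⟪α p, p⟫ = αd * ∫ x in D, p x ^ 2 ∂μ + αn * ∫ x in Dᶜ, p x ^ 2 ∂μ := by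
    rw [inner_eq_setIntegral_add_setIntegral_compl hD,
      setIntegral_mul_eq_const_mul_setIntegral_sq hD αd
        ((hα p).mono fun x hx hxD => by simp [hx, hxD]),
      setIntegral_mul_eq_const_mul_setIntegral_sq hD.compl αn
        ((hα p).mono fun x hx hxN => by simp_all)]
  have hvp_D := two_mul_integral_mul_le ((Lp.memLp v).restrict D) ((Lp.memLp p).restrict D) hαd
  have hvp_N := two_mul_integral_mul_le ((Lp.memLp v).restrict Dᶜ) ((Lp.memLp p).restrict Dᶜ) hαn
  rw [hαp_eq, inner_eq_setIntegral_add_setIntegral_compl hD v p] at hαp_le_vp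
  linarith

/-- Lemma 4.1: stability estimate for the heterogeneously regularized
Dirichlet-to-Neumann saddle-point system with G = L²(Γ). -/
theorem stmt1
    {H : Type*} [NormedAddCommGroup H] [InnerProductSpace ℝ H] [CompleteSpace H]
    {Γ : Type*} [MeasurableSpace Γ] (μ : Measure Γ)
    (A : H →L[ℝ] StrongDual ℝ H) (m M : ℝ) (hm : 0 < m) (hM : 0 < M)
    (hcoer : ∀ w : H, m * ‖w‖ ^ 2 ≤ A w w)
    (hbdd : ∀ w z : H, A w z ≤ M * ‖w‖ * ‖z‖)
    (T : H →L[ℝ] Lp ℝ 2 μ)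
    (D : Set Γ) (hD : MeasurableSet D)
    (αd αn : ℝ) (hαd : 0 < αd) (hαn : 0 < αn)
    (α : Lp ℝ 2 μ →L[ℝ] Lp ℝ 2 μ)
    (hα : ∀ f : Lp ℝ 2 μ, (α f : Γ → ℝ) =ᵐ[μ] fun x => (Set.indicator D (fun _ => αd) x + Set.indicator Dᶜ (fun _ => αn) x) * f x)
    (v : Lp ℝ 2 μ) (w : H) (p : Lp ℝ 2 μ)
    (h1 : ∀ z : H, A w z - ⟪p, T z⟫ = 0)
    (h2 : ∀ q : Lp ℝ 2 μ, ⟪T w, q⟫ + ⟪α p, q⟫ = ⟪v, q⟫) :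
    αd * ∫ x in D, (p x) ^ 2 ∂μ + αn * ∫ x in Dᶜ, (p x) ^ 2 ∂μ ≤
      αd⁻¹ * ∫ x in D, (v x) ^ 2 ∂μ + αn⁻¹ * ∫ x in Dᶜ, (v x) ^ 2 ∂μ :=
  stmt1_general μ A m hm hcoer T D hD αd αn hαd hαn α hα v w p h1 h2
end

section
/- Let G be a real Hilbert space, A : H → H' coercive and bounded on a Hilbert space H, T : H → G bounded, and α a positive self-adjoint bounded operator on G. Let Λ : G → G denote the regularized DtN map sending v to the p-component of the solution of the saddle-point system ⟨Aw, z⟩ − (p, Tz) = 0, (Tw, q) + (αp, q) = (v, q). Let Λ* be defined analogously with A replaced by its adjoint A* and appropriate sign changes: ⟨A*w₂, z⟩ + (p₂, Tz) = 0, −(Tw₂, q) + (αp₂, q) = (p₁, q). Then Λ* is the Hilbert-space adjoint of Λ: (Λ* p₁, v)_G = (p₁, Λ v)_G for all p₁, v ∈ G. -/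
open RealInnerProductSpace

theorem stmt16_general
    {H G : Type*} [NormedAddCommGroup H] [InnerProductSpace ℝ H]
    [NormedAddCommGroup G] [InnerProductSpace ℝ G]
    (A : H →L[ℝ] StrongDual ℝ H)
    (T : H →L[ℝ] G)
    (α : G →L[ℝ] G) (hαsa : ∀ p q : G, ⟪α p, q⟫ = ⟪p, α q⟫)
    (v p₁ : G) (w : H) (p : G) (w₂ : H) (p₂ : G)
    (hsys1a : ∀ z : H, A w z - ⟪p, T z⟫ = 0)
    (hsys1b : ∀ q : G, ⟪T w, q⟫ + ⟪α p, q⟫ = ⟪v, q⟫)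
    (hsys2a : ∀ z : H, A z w₂ + ⟪p₂, T z⟫ = 0)
    (hsys2b : ∀ q : G, -⟪T w₂, q⟫ + ⟪α p₂, q⟫ = ⟪p₁, q⟫) :
    ⟪p₂, v⟫ = ⟪p₁, p⟫ := by
  -- The coupling term `A w w₂` links the two systems; symmetry of `α` swaps the regularizations.
  calc ⟪p₂, v⟫
      = ⟪p₂, T w⟫ + ⟪α p₂, p⟫ := by
        rw [real_inner_comm, ← hsys1b, real_inner_comm (T w), hαsa, real_inner_comm p]
    _ = -A w w₂ + ⟪α p₂, p⟫ := by linarith [hsys2a w]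
    _ = -⟪T w₂, p⟫ + ⟪α p₂, p⟫ := by rw [sub_eq_zero.mp (hsys1a w₂), real_inner_comm]
    _ = ⟪p₁, p⟫ := hsys2b p

/-- The sign-flipped saddle-point system defines the Hilbert-space adjoint of
the regularized DtN map: (Λ* p₁, v) = (p₁, Λ v). -/
theorem stmt16
    {H G : Type*} [NormedAddCommGroup H] [InnerProductSpace ℝ H] [CompleteSpace H]
    [NormedAddCommGroup G] [InnerProductSpace ℝ G] [CompleteSpace G]
    (A : H →L[ℝ] StrongDual ℝ H) (m M : ℝ) (hm : 0 < m) (hM : 0 < M)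
    (hcoer : ∀ w : H, m * ‖w‖ ^ 2 ≤ A w w)
    (hbdd : ∀ w z : H, A w z ≤ M * ‖w‖ * ‖z‖)
    (T : H →L[ℝ] G)
    (α : G →L[ℝ] G) (hαsa : ∀ p q : G, ⟪α p, q⟫ = ⟪p, α q⟫)
    (hαpos : ∀ p : G, p ≠ 0 → 0 < ⟪α p, p⟫)
    (v p₁ : G) (w : H) (p : G) (w₂ : H) (p₂ : G)
    (hsys1a : ∀ z : H, A w z - ⟪p, T z⟫ = 0)
    (hsys1b : ∀ q : G, ⟪T w, q⟫ + ⟪α p, q⟫ = ⟪v, q⟫)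
    (hsys2a : ∀ z : H, A z w₂ + ⟪p₂, T z⟫ = 0)
    (hsys2b : ∀ q : G, -⟪T w₂, q⟫ + ⟪α p₂, q⟫ = ⟪p₁, q⟫) :
    ⟪p₂, v⟫ = ⟪p₁, p⟫ :=
  stmt16_general A T α hαsa v p₁ w p w₂ p₂ hsys1a hsys1b hsys2a hsys2b
end
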